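/- For all n ≥ 0, spa(8n+7) ≡ spa(n) (mod 2). -/
import Mathlib

def spa : ℕ → ℕ
  | 0 => 1
  | 1 => 0
  | n + 2 => if (n + 2) % 2 = 0 then spa ((n + 2) / 2) else spa n + spa (n - 1)
decreasing_by all_goals omega

lemma spa_even' (k : ℕ) : spa (2 * k + 2) = spa (k + 1) := by
  rw [spa]
  have h1 : (2 * k + 2) % 2 = 0 := by omega
  have h2 : (2 * k + 2) / 2 = k + 1 := by omega
  rw [h1, h2]
  simp

lemma spa_odd' (k : ℕ) : spa (2 * k + 3) = spa (2 * k + 1) + spa (2 * k) := by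
  rw [show 2 * k + 3 = (2 * k + 1) + 2 by ring, spa]
  have h1 : (2 * k + 1 + 2) % 2 = 1 := by omega
  simp [h1]

lemma spa_mod7 (n : ℕ) : spa n % 2 = spa (n % 7) % 2 := by
  induction n using Nat.strong_induction_on with
  | _ n ih =>
    obtain ⟨m, rfl | rfl⟩ := Nat.even_or_odd' n
    · rcases Nat.eq_zero_or_pos m with rfl | hm
      · rfl
      · obtain ⟨k, rfl⟩ := Nat.exists_eq_add_of_le hm
        rw [show 2 * (1 + k) = 2 * k + 2 by ring, spa_even',
          ih (k + 1) (by omega)]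
        have h7 : (k + 1) % 7 < 7 := by omega
        have e : (2 * k + 2) % 7 = (2 * ((k + 1) % 7)) % 7 := by omega
        rw [e]
        interval_cases h : ((k + 1) % 7) <;> simp [spa]
    · rcases Nat.eq_zero_or_pos m with rfl | hm
      · rfl
      · obtain ⟨k, rfl⟩ := Nat.exists_eq_add_of_le hm
        rw [show 2 * (1 + k) + 1 = 2 * k + 3 by ring, spa_odd']
        have i1 := ih (2 * k + 1) (by omega)
        have i2 := ih (2 * k) (by omega)
        have h7 : k % 7 < 7 := by omega
        have e1 : (2 * k + 1) % 7 = (2 * (k % 7) + 1) % 7 := by omega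
        have e2 : (2 * k) % 7 = (2 * (k % 7)) % 7 := by omega
        have e3 : (2 * k + 3) % 7 = (2 * (k % 7) + 3) % 7 := by omega
        rw [e1] at i1; rw [e2] at i2; rw [e3]
        interval_cases h : (k % 7) <;> simp [spa] at i1 i2 ⊢ <;> omega

theorem spa_cong (n : ℕ) : spa (8 * n + 7) ≡ spa n [MOD 2] := by
  unfold Nat.ModEq
  rw [spa_mod7 (8 * n + 7), spa_mod7 n]
  have : (8 * n + 7) % 7 = n % 7 := by omega
  rw [this]
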